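/- Let Γ be a subgroup of SL(2,ℝ), r a nonnegative integer, D an open subset of ℍ stable under the action of Γ, and g an analytic function on D satisfying g(γ·z) = (cz+d)^{2(r+1)} g(z) for all γ = [[a,b],[c,d]] ∈ Γ and z ∈ D. If f is an analytic function on D satisfying f^{(r+1)} + g f = 0 on D, then for every γ = [[a,b],[c,d]] ∈ Γ, the function f|_{−r}γ : z ↦ (cz+d)^r f(γ·z) is analytic on D and also satisfies (f|_{−r}γ)^{(r+1)} + g · (f|_{−r}γ) = 0 on D. -/

import Mathlib

/-- The automorphy factor `cz + d` for `γ = [[a,b],[c,d]] ∈ SL(2,ℝ)`. -/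
noncomputable def jfac (γ : Matrix.SpecialLinearGroup (Fin 2) ℝ) (z : ℂ) : ℂ :=
  (((γ : Matrix (Fin 2) (Fin 2) ℝ) 1 0 : ℝ) : ℂ) * z +
    (((γ : Matrix (Fin 2) (Fin 2) ℝ) 1 1 : ℝ) : ℂ)

/-- The Möbius action `γ·z = (az+b)/(cz+d)` of `γ ∈ SL(2,ℝ)` on `z ∈ ℂ`. -/
noncomputable def moebius (γ : Matrix.SpecialLinearGroup (Fin 2) ℝ) (z : ℂ) : ℂ :=
  ((((γ : Matrix (Fin 2) (Fin 2) ℝ) 0 0 : ℝ) : ℂ) * z +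
    (((γ : Matrix (Fin 2) (Fin 2) ℝ) 0 1 : ℝ) : ℂ)) / jfac γ z

/-!
Bol's identity: for `γ ∈ SL(2,ℝ)` with `j(z) = cz + d`,
`(d/dz)^(n+1) [j^n · F∘γ] = j^-(n+2) · F^(n+1)∘γ`.
It follows by induction on `n`: writing `j^(n+1) · F∘γ = j · (j^n · F∘γ)`, Leibniz's rule for the
affine factor `j` leaves only two terms, and the induction hypothesis differentiated once more
makes the terms involving `F^(n+1)` cancel. With `n = r`, the differential equation at `γz` and
the automorphy of `g` (`j^-(r+2) · j^(2(r+1)) = j^r`) give the equation at `z`.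
-/

theorem iteratedDeriv_succ_affine_mul {𝕜 : Type*} [NontriviallyNormedField 𝕜] {ψ : 𝕜 → 𝕜}
    {x : 𝕜} (c d : 𝕜) (n : ℕ) (hψ : ContDiffAt 𝕜 (n + 1) ψ x) :
    iteratedDeriv (n + 1) (fun w => (c * w + d) * ψ w) x =
      (c * x + d) * iteratedDeriv (n + 1) ψ x + (n + 1) * c * iteratedDeriv n ψ x := by
  have hJ : ContDiffAt 𝕜 (n + 1) (fun w => c * w + d) x := by fun_prop
  have hJ_high : ∀ i, iteratedDeriv (i + 2) (fun w => c * w + d) x = 0 := by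
    simp [iteratedDeriv_succ']
  rw [iteratedDeriv_fun_mul hJ hψ, Finset.sum_range_succ', Finset.sum_range_succ']
  simp only [hJ_high, iteratedDeriv_succ', iteratedDeriv_zero, deriv_add_const',
    deriv_const_mul_id', mul_zero, zero_mul, Finset.sum_const_zero, zero_add,
    Nat.choose_zero_right, Nat.choose_one_right, Nat.cast_add, Nat.cast_one, one_mul,
    add_tsub_cancel_right, tsub_zero, Nat.reduceSubDiff]
  ring

section Moebius

variable (γ : Matrix.SpecialLinearGroup (Fin 2) ℝ)

theorem ad_sub_bc_eq_one_complex :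
    (((γ : Matrix (Fin 2) (Fin 2) ℝ) 0 0 : ℝ) : ℂ) * (((γ : Matrix (Fin 2) (Fin 2) ℝ) 1 1 : ℝ) : ℂ)
      - (((γ : Matrix (Fin 2) (Fin 2) ℝ) 0 1 : ℝ) : ℂ) *
        (((γ : Matrix (Fin 2) (Fin 2) ℝ) 1 0 : ℝ) : ℂ) = 1 := by
  have h := γ.det_coe
  rw [Matrix.det_fin_two] at h
  exact_mod_cast h

theorem jfac_ne_zero {z : ℂ} (hz : 0 < z.im) : jfac γ z ≠ 0 := by
  intro h
  have hc : (γ : Matrix (Fin 2) (Fin 2) ℝ) 1 0 = 0 := by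
    have him := congrArg Complex.im h
    simp only [jfac, Complex.add_im, Complex.mul_im, Complex.ofReal_re, Complex.ofReal_im,
      zero_mul, add_zero, Complex.zero_im] at him
    exact (mul_eq_zero.mp him).resolve_right hz.ne'
  have hd : (γ : Matrix (Fin 2) (Fin 2) ℝ) 1 1 = 0 := by
    simpa [jfac, hc] using h
  simpa [hc, hd] using ad_sub_bc_eq_one_complex γ

theorem hasDerivAt_jfac (z : ℂ) :
    HasDerivAt (jfac γ) (((γ : Matrix (Fin 2) (Fin 2) ℝ) 1 0 : ℝ) : ℂ) z := by
  have h := ((hasDerivAt_id z).const_mul (((γ : Matrix (Fin 2) (Fin 2) ℝ) 1 0 : ℝ) : ℂ)).add_const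
    (((γ : Matrix (Fin 2) (Fin 2) ℝ) 1 1 : ℝ) : ℂ)
  simp only [id, mul_one] at h
  exact h

theorem analyticAt_jfac (z : ℂ) : AnalyticAt ℂ (jfac γ) z := by
  unfold jfac; fun_prop

theorem analyticAt_moebius {z : ℂ} (hz : jfac γ z ≠ 0) : AnalyticAt ℂ (moebius γ) z :=
  AnalyticAt.div (by fun_prop) (analyticAt_jfac γ z) hz

theorem hasDerivAt_moebius {z : ℂ} (hz : jfac γ z ≠ 0) :
    HasDerivAt (moebius γ) (jfac γ z ^ (-2 : ℤ)) z := by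
  set a := (((γ : Matrix (Fin 2) (Fin 2) ℝ) 0 0 : ℝ) : ℂ)
  set b := (((γ : Matrix (Fin 2) (Fin 2) ℝ) 0 1 : ℝ) : ℂ)
  have hnum : HasDerivAt (fun w => a * w + b) a z := by
    simpa using ((hasDerivAt_id z).const_mul a).add_const b
  refine (hnum.div (hasDerivAt_jfac γ z) hz).congr_deriv ?_
  rw [zpow_neg, zpow_ofNat]
  field_simp
  rw [jfac]
  linear_combination ad_sub_bc_eq_one_complex γ

theorem hasDerivAt_jfac_zpow_mul_comp {G : ℂ → ℂ} {z : ℂ} (m : ℤ) (hz : jfac γ z ≠ 0)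
    (hG : DifferentiableAt ℂ G (moebius γ z)) :
    HasDerivAt (fun w => jfac γ w ^ m * G (moebius γ w))
      (m * (((γ : Matrix (Fin 2) (Fin 2) ℝ) 1 0 : ℝ) : ℂ) * jfac γ z ^ (m - 1) * G (moebius γ z)
        + jfac γ z ^ (m - 2) * deriv G (moebius γ z)) z := by
  have hpow := (hasDerivAt_zpow m (jfac γ z) (Or.inl hz)).comp z (hasDerivAt_jfac γ z)
  have hcomp := hG.hasDerivAt.comp z (hasDerivAt_moebius γ hz)
  refine (hpow.mul hcomp).congr_deriv ?_
  rw [show m - 2 = m + (-2) by ring, zpow_add₀ hz, Function.comp_apply, Function.comp_apply]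
  ring

theorem analyticOnNhd_jfac_pow_mul_comp {U V : Set ℂ} {F : ℂ → ℂ} (k : ℕ)
    (hJ : ∀ w ∈ U, jfac γ w ≠ 0) (hmaps : Set.MapsTo (moebius γ) U V)
    (hF : AnalyticOnNhd ℂ F V) :
    AnalyticOnNhd ℂ (fun w => jfac γ w ^ k * F (moebius γ w)) U := fun w hw =>
  ((analyticAt_jfac γ w).pow k).mul ((hF _ (hmaps hw)).comp (analyticAt_moebius γ (hJ w hw)))

theorem iteratedDeriv_succ_jfac_pow_mul_comp {U V : Set ℂ} {F : ℂ → ℂ} (hU : IsOpen U)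
    (hJ : ∀ w ∈ U, jfac γ w ≠ 0) (hmaps : Set.MapsTo (moebius γ) U V)
    (hF : AnalyticOnNhd ℂ F V) (n : ℕ) :
    ∀ z ∈ U, iteratedDeriv (n + 1) (fun w => jfac γ w ^ n * F (moebius γ w)) z =
      jfac γ z ^ (-(n + 2 : ℤ)) * iteratedDeriv (n + 1) F (moebius γ z) := by
  have hFk (k : ℕ) : AnalyticOnNhd ℂ (iteratedDeriv k F) V := by
    rw [iteratedDeriv_eq_iterate]; exact hF.iterated_deriv k
  induction n with
  | zero =>
    intro z hz
    simpa [iteratedDeriv_succ] using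
      (hasDerivAt_jfac_zpow_mul_comp γ 0 (hJ z hz) (hF _ (hmaps hz)).differentiableAt).deriv
  | succ n ih =>
    intro z hz
    have hJz := hJ z hz
    set ψ := fun w => jfac γ w ^ n * F (moebius γ w)
    have hψ : ContDiffAt ℂ (n + 1 + 1) ψ z :=
      (analyticOnNhd_jfac_pow_mul_comp γ n hJ hmaps hF z hz).contDiffAt
    have hψ_succ : iteratedDeriv (n + 2) ψ z =
        -(n + 2) * (((γ : Matrix (Fin 2) (Fin 2) ℝ) 1 0 : ℝ) : ℂ) * jfac γ z ^ (-(n + 3 : ℤ))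
            * iteratedDeriv (n + 1) F (moebius γ z)
          + jfac γ z ^ (-(n + 4 : ℤ)) * iteratedDeriv (n + 2) F (moebius γ z) := by
      rw [iteratedDeriv_succ, (Filter.eventuallyEq_of_mem (hU.mem_nhds hz) ih).deriv_eq,
        (hasDerivAt_jfac_zpow_mul_comp γ _ hJz
          ((hFk (n + 1)) _ (hmaps hz)).differentiableAt).deriv, ← iteratedDeriv_succ]
      push_cast
      ring_nf
    have hsplit : (fun w => jfac γ w ^ (n + 1) * F (moebius γ w)) = fun w =>
        ((((γ : Matrix (Fin 2) (Fin 2) ℝ) 1 0 : ℝ) : ℂ) * w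
          + (((γ : Matrix (Fin 2) (Fin 2) ℝ) 1 1 : ℝ) : ℂ)) * ψ w := by
      funext w
      simp only [ψ, jfac]
      ring
    have hcancel₃ : jfac γ z * jfac γ z ^ (-(n + 3 : ℤ)) = jfac γ z ^ (-(n + 2 : ℤ)) := by
      rw [← zpow_one_add₀ hJz]; ring_nf
    have hcancel₄ : jfac γ z * jfac γ z ^ (-(n + 4 : ℤ)) = jfac γ z ^ (-(n + 3 : ℤ)) := by
      rw [← zpow_one_add₀ hJz]; ring_nf
    rw [hsplit, iteratedDeriv_succ_affine_mul _ _ _ hψ, hψ_succ, ih z hz]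
    change jfac γ z * _ + _ = _
    rw [show -(((n + 1 : ℕ) : ℤ) + 2) = -(n + 3 : ℤ) by push_cast; ring]
    push_cast
    linear_combination
      (-(n + 2) * (((γ : Matrix (Fin 2) (Fin 2) ℝ) 1 0 : ℝ) : ℂ)
        * iteratedDeriv (n + 1) F (moebius γ z)) * hcancel₃
      + iteratedDeriv (n + 2) F (moebius γ z) * hcancel₄

end Moebius

theorem slash_preserves_solution_space_general
    (Γ : Subgroup (Matrix.SpecialLinearGroup (Fin 2) ℝ)) (r : ℕ)
    (D : Set ℂ) (hDo : IsOpen D) (hDH : D ⊆ {z : ℂ | 0 < z.im})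
    (hstab : ∀ γ : Γ, ∀ z ∈ D, moebius γ z ∈ D)
    (g : ℂ → ℂ)
    (hauto : ∀ γ : Γ, ∀ z ∈ D, g (moebius γ z) = (jfac γ z) ^ (2 * (r + 1)) * g z)
    (f : ℂ → ℂ) (hf : AnalyticOnNhd ℂ f D)
    (hode : ∀ z ∈ D, iteratedDeriv (r + 1) f z + g z * f z = 0) :
    ∀ γ : Γ,
      AnalyticOnNhd ℂ (fun z => (jfac γ z) ^ r * f (moebius γ z)) D ∧
      ∀ z ∈ D,
        iteratedDeriv (r + 1) (fun w => (jfac γ w) ^ r * f (moebius γ w)) z +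
          g z * ((jfac γ z) ^ r * f (moebius γ z)) = 0 := by
  intro γ
  have hJ : ∀ w ∈ D, jfac γ w ≠ 0 := fun w hw => jfac_ne_zero γ (hDH hw)
  have hmaps : Set.MapsTo (moebius γ) D D := hstab γ
  refine ⟨analyticOnNhd_jfac_pow_mul_comp γ r hJ hmaps hf, fun z hz => ?_⟩
  have hweight : jfac γ z ^ (-(r + 2 : ℤ)) * jfac γ z ^ (2 * (r + 1)) = jfac γ z ^ r := by
    rw [← zpow_natCast, ← zpow_natCast, ← zpow_add₀ (hJ z hz)]
    push_cast
    ring_nf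
  rw [iteratedDeriv_succ_jfac_pow_mul_comp γ hDo hJ hmaps hf r z hz,
    eq_neg_of_add_eq_zero_left (hode _ (hmaps hz)), hauto γ z hz]
  linear_combination (-(g z * f (moebius γ z))) * hweight

/-- If `g` is an automorphic form of weight `2(r+1)` on a `Γ`-stable domain `D ⊆ ℍ` and
`f` solves `f^{(r+1)} + g f = 0` on `D`, then so does `f|₋ᵣγ : z ↦ (cz+d)^r f(γ·z)`
for every `γ ∈ Γ`. -/
theorem slash_preserves_solution_space
    (Γ : Subgroup (Matrix.SpecialLinearGroup (Fin 2) ℝ)) (r : ℕ)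
    (D : Set ℂ) (hDo : IsOpen D) (hDH : D ⊆ {z : ℂ | 0 < z.im})
    (hstab : ∀ γ : Γ, ∀ z ∈ D, moebius γ z ∈ D)
    (g : ℂ → ℂ) (hg : AnalyticOnNhd ℂ g D)
    (hauto : ∀ γ : Γ, ∀ z ∈ D, g (moebius γ z) = (jfac γ z) ^ (2 * (r + 1)) * g z)
    (f : ℂ → ℂ) (hf : AnalyticOnNhd ℂ f D)
    (hode : ∀ z ∈ D, iteratedDeriv (r + 1) f z + g z * f z = 0) :
    ∀ γ : Γ,
      AnalyticOnNhd ℂ (fun z => (jfac γ z) ^ r * f (moebius γ z)) D ∧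
      ∀ z ∈ D,
        iteratedDeriv (r + 1) (fun w => (jfac γ w) ^ r * f (moebius γ w)) z +
          g z * ((jfac γ z) ^ r * f (moebius γ z)) = 0 :=
  slash_preserves_solution_space_general Γ r D hDo hDH hstab g hauto f hf hode
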